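/- Let f : ℤⁿ → ℝ ∪ {+∞} be integrally convex, A a nonempty subset of {1,…,n}, x ∈ dom f with f(x) ≤ f(x + 𝟙_A). Then for any i ∈ {1,…,n}, δ ∈ {+1, 0, −1}, and λ ∈ ℤ₊, we have f(x + 𝟙_A + δe_i) ≤ f(x + 𝟙_A + δe_i + λ·𝟙_A). -/

import Mathlib

open scoped BigOperators

noncomputable section

/-- Integer neighborhood `N(x)` of a real point. -/
def intNbhd {n : ℕ} (x : Fin n → ℝ) : Set (Fin n → ℤ) :=
  {z | ∀ i, |x i - (z i : ℝ)| < 1}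

/-- Local convex extension of `f : ℤⁿ → ℝ ∪ {+∞}`. -/
noncomputable def localExt {n : ℕ} (f : (Fin n → ℤ) → EReal) (x : Fin n → ℝ) : EReal :=
  sInf { v : EReal | ∃ (m : ℕ) (lam : Fin m → ℝ) (y : Fin m → (Fin n → ℤ)),
      (∀ j, 0 ≤ lam j) ∧ (∑ j, lam j) = 1 ∧ (∀ j, y j ∈ intNbhd x) ∧
      (∀ i, (∑ j, lam j * ((y j i : ℝ))) = x i) ∧
      v = ∑ j, (((lam j : ℝ) : EReal) * f (y j)) }

/-- A function is integrally convex if its local convex extension is convex. -/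
def IsIntegrallyConvexFn {n : ℕ} (f : (Fin n → ℤ) → EReal) : Prop :=
  ∀ x y : Fin n → ℝ, ∀ t : ℝ, 0 ≤ t → t ≤ 1 →
    localExt f (fun i => t * x i + (1 - t) * y i) ≤
      ((t : ℝ) : EReal) * localExt f x + (((1 - t : ℝ)) : EReal) * localExt f y

/-- Coercion of an integer point to a real point. -/
def realify {n : ℕ} (z : Fin n → ℤ) : Fin n → ℝ := fun i => (z i : ℝ)

/-- A set `S ⊆ ℤⁿ` is integrally convex. -/
def IsIntegrallyConvexSet {n : ℕ} (S : Set (Fin n → ℤ)) : Prop :=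
  ∀ x : Fin n → ℝ, x ∈ convexHull ℝ (realify '' S) →
    x ∈ convexHull ℝ (realify '' (S ∩ intNbhd x))

/-! With `t = 1 / (λ + 1)`, write `y = x + 𝟙_A + δ eᵢ`. The point `t (y + λ 𝟙_A) + (1 - t) x`
equals `t y + (1 - t) (x + 𝟙_A)`, a point of the unit edge from `x + 𝟙_A` to `y`. Its only integer
neighbours are the two endpoints, and the `i`-th coordinate forces the weights, so
`f̃` there is at least `t f(y) + (1 - t) f(x + 𝟙_A)`. Convexity of `f̃` bounds it above by
`t f(y + λ 𝟙_A) + (1 - t) f(x)`, and since `f(x)` is finite and `f(x) ≤ f(x + 𝟙_A)`,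
`f(y) ≤ f(y + λ 𝟙_A)`. -/

namespace EReal

lemma sum_coe_mul_of_nonneg {ι : Type*} (s : Finset ι) (w : ι → ℝ) (hw : ∀ j ∈ s, 0 ≤ w j)
    (u : EReal) : ∑ j ∈ s, (w j : EReal) * u = ((∑ j ∈ s, w j : ℝ) : EReal) * u := by
  induction s using Finset.cons_induction with
  | empty => simp
  | cons a s ha ih =>
    rw [Finset.sum_cons, Finset.sum_cons, ih fun j hj => hw j (Finset.mem_cons_of_mem hj),
      coe_add, right_distrib_of_nonneg]
    · exact EReal.coe_nonneg.2 (hw a (Finset.mem_cons_self a s))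
    · exact EReal.coe_nonneg.2 (Finset.sum_nonneg fun j hj => hw j (Finset.mem_cons_of_mem hj))

lemma coe_mul_add_coe_one_sub_mul {s : ℝ} (hs0 : 0 ≤ s) (hs1 : s ≤ 1) (u : EReal) :
    (s : EReal) * u + ((1 - s : ℝ) : EReal) * u = u := by
  rw [← right_distrib_of_nonneg (EReal.coe_nonneg.2 hs0)
    (EReal.coe_nonneg.2 (_root_.sub_nonneg.2 hs1)), ← coe_add, add_sub_cancel, coe_one, one_mul]

lemma le_of_coe_mul_add_le {s r : ℝ} (hs : 0 < s) (hr : 0 ≤ r) {a b c d : EReal}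
    (hd : d ≠ ⊤) (hd' : d ≠ ⊥) (hdc : d ≤ c) (h : s * a + r * c ≤ s * b + r * d) : a ≤ b := by
  lift d to ℝ using ⟨hd, hd'⟩
  have hsd : ((r * d : ℝ) : EReal) + s * a ≤ (r * d : ℝ) + s * b := by
    rw [coe_mul, add_comm, add_comm _ (_ * b)]
    exact (add_le_add_right (mul_le_mul_of_nonneg_left hdc (EReal.coe_nonneg.2 hr)) _).trans h
  have hsab := addLECancellable_coe _ hsd
  have hinv : ∀ u : EReal, ((s⁻¹ : ℝ) : EReal) * (s * u) = u := fun u => by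
    rw [← mul_assoc, ← coe_mul, inv_mul_cancel₀ hs.ne', coe_one, one_mul]
  rw [← hinv a, ← hinv b]
  exact mul_le_mul_of_nonneg_left hsab (EReal.coe_nonneg.2 (inv_nonneg.2 hs.le))

end EReal

section Splitting

variable {ι α : Type*} [Fintype ι] [DecidableEq α] (w : ι → ℝ) {ys : ι → α} {a b : α}

lemma sum_mul_eq_of_forall_eq_or_eq (hys : ∀ j, ys j = a ∨ ys j = b) (g : α → ℝ) :
    ∑ j, w j * g (ys j) =
      (∑ j with ys j = b, w j) * g b + (∑ j with ys j ≠ b, w j) * g a := by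
  rw [← Finset.sum_filter_add_sum_filter_not _ (fun j => ys j = b), Finset.sum_mul,
    Finset.sum_mul]
  congr 1 <;> refine Finset.sum_congr rfl fun j hj => ?_
  · rw [(Finset.mem_filter.1 hj).2]
  · rw [(hys j).resolve_right (Finset.mem_filter.1 hj).2]

lemma EReal.sum_coe_mul_eq_of_forall_eq_or_eq (hw : ∀ j, 0 ≤ w j)
    (hys : ∀ j, ys j = a ∨ ys j = b) (g : α → EReal) :
    ∑ j, (w j : EReal) * g (ys j) =
      ((∑ j with ys j = b, w j : ℝ) : EReal) * g b +
        ((∑ j with ys j ≠ b, w j : ℝ) : EReal) * g a := by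
  rw [← Finset.sum_filter_add_sum_filter_not _ (fun j => ys j = b),
    ← EReal.sum_coe_mul_of_nonneg _ _ fun j _ => hw j,
    ← EReal.sum_coe_mul_of_nonneg _ _ fun j _ => hw j]
  congr 1 <;> refine Finset.sum_congr rfl fun j hj => ?_
  · rw [(Finset.mem_filter.1 hj).2]
  · rw [(hys j).resolve_right (Finset.mem_filter.1 hj).2]

end Splitting

lemma Int.eq_or_eq_of_abs_sub_lt_one {a b z : ℤ} (hab : |b - a| ≤ 1) {s : ℝ} (hs0 : 0 ≤ s)
    (hs1 : s ≤ 1) (h : |s * b + (1 - s) * a - z| < 1) : z = a ∨ z = b := by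
  obtain ⟨hlo, hhi⟩ := abs_lt.1 h
  have hz_lo : min a b - 1 < z := by
    have : ((min a b : ℤ) : ℝ) ≤ s * b + (1 - s) * a := by
      rcases le_total a b with hle | hle
      · rw [min_eq_left hle]; nlinarith [(Int.cast_le (R := ℝ)).2 hle]
      · rw [min_eq_right hle]; nlinarith [(Int.cast_le (R := ℝ)).2 hle]
    exact_mod_cast (show (((min a b - 1 : ℤ)) : ℝ) < z by push_cast at this ⊢; linarith)
  have hz_hi : z < max a b + 1 := by
    have : s * b + (1 - s) * a ≤ ((max a b : ℤ) : ℝ) := by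
      rcases le_total a b with hle | hle
      · rw [max_eq_right hle]; nlinarith [(Int.cast_le (R := ℝ)).2 hle]
      · rw [max_eq_left hle]; nlinarith [(Int.cast_le (R := ℝ)).2 hle]
    exact_mod_cast (show (z : ℝ) < ((max a b + 1 : ℤ) : ℝ) by push_cast at this ⊢; linarith)
  obtain ⟨h1, h2⟩ := abs_le.1 hab
  omega

section UnitSegment

variable {n : ℕ} {a b : Fin n → ℤ} {i : Fin n} {δ : ℤ} {s : ℝ}

lemma localExt_realify_le (f : (Fin n → ℤ) → EReal) (z : Fin n → ℤ) :
    localExt f (realify z) ≤ f z := by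
  refine sInf_le ⟨1, fun _ => 1, fun _ => z, fun _ => zero_le_one, by simp, ?_, ?_, ?_⟩
  · simp [intNbhd, realify]
  · simp [realify]
  · simp

lemma eq_or_eq_of_mem_intNbhd_segment (hb : b = a + Pi.single i δ) (hδ : |δ| ≤ 1)
    (hs0 : 0 ≤ s) (hs1 : s ≤ 1) {z : Fin n → ℤ}
    (hz : z ∈ intNbhd fun k => s * realify b k + (1 - s) * realify a k) : z = a ∨ z = b := by
  have hcoord : ∀ k, z k = a k ∨ z k = b k := fun k =>
    Int.eq_or_eq_of_abs_sub_lt_one (by rcases eq_or_ne k i with rfl | hk <;> simp [*])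
      hs0 hs1 (by simpa [realify, abs_sub_comm] using hz k)
  have hoff : ∀ k, k ≠ i → z k = a k := fun k hk => by
    simpa [hb, hk] using hcoord k
  rcases hcoord i with hi | hi
  · left; funext k; rcases eq_or_ne k i with rfl | hk
    exacts [hi, hoff k hk]
  · right; funext k; rcases eq_or_ne k i with rfl | hk
    exacts [hi, by simp [hoff k hk, hb, hk]]

lemma le_localExt_of_segment (f : (Fin n → ℤ) → EReal) (hb : b = a + Pi.single i δ)
    (hδ : |δ| ≤ 1) (hs0 : 0 ≤ s) (hs1 : s ≤ 1) :
    (s : EReal) * f b + ((1 - s : ℝ) : EReal) * f a ≤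
      localExt f fun k => s * realify b k + (1 - s) * realify a k := by
  refine le_sInf ?_
  rintro v ⟨m, w, ys, hw, hw1, hnb, hco, rfl⟩
  have hys : ∀ j, ys j = a ∨ ys j = b := fun j =>
    eq_or_eq_of_mem_intNbhd_segment hb hδ hs0 hs1 (hnb j)
  have hcoord := hco i
  rw [sum_mul_eq_of_forall_eq_or_eq w hys fun y => (y i : ℝ)] at hcoord
  rw [EReal.sum_coe_mul_eq_of_forall_eq_or_eq w hw hys]
  set W := ∑ j with ys j = b, w j
  have hW' : ∑ j with ys j ≠ b, w j = 1 - W := by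
    linarith [Finset.sum_filter_add_sum_filter_not Finset.univ (fun j => ys j = b) w]
  have hW0 : 0 ≤ W := Finset.sum_nonneg fun j _ => hw j
  have hW1 : W ≤ 1 := by
    rw [← sub_nonneg, ← hW']; exact Finset.sum_nonneg fun j _ => hw j
  rw [hW'] at hcoord ⊢
  rcases eq_or_ne δ 0 with rfl | hδ0
  · rw [show f b = f a by simp [hb], EReal.coe_mul_add_coe_one_sub_mul hs0 hs1,
      EReal.coe_mul_add_coe_one_sub_mul hW0 hW1]
  · have hbi : (b i : ℝ) = a i + δ := by simp [hb]
    have hWs : W = s := by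
      simp only [realify, hbi] at hcoord
      have : (W - s) * δ = 0 := by linarith
      exact sub_eq_zero.1 ((mul_eq_zero.1 this).resolve_right (by exact_mod_cast hδ0))
    rw [hWs]

end UnitSegment

theorem step_lemma_characteristic_direction_general {n : ℕ}
    (f : (Fin n → ℤ) → EReal) (hbot : ∀ x, f x ≠ ⊥)
    (hf : IsIntegrallyConvexFn f)
    (A : Finset (Fin n))
    (x : Fin n → ℤ) (hxdom : f x ≠ ⊤)
    (hx : f x ≤ f (fun j => x j + if j ∈ A then 1 else 0)) :
    ∀ (i : Fin n) (δ : ℤ), |δ| ≤ 1 → ∀ lam : ℕ,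
      f (fun j => x j + (if j ∈ A then 1 else 0) + (if j = i then δ else 0)) ≤
        f (fun j => x j + (if j ∈ A then 1 else 0) + (if j = i then δ else 0) +
            (lam : ℤ) * (if j ∈ A then 1 else 0)) := by
  intro i δ hδ lam
  set xA : Fin n → ℤ := fun j => x j + if j ∈ A then 1 else 0
  set y : Fin n → ℤ := fun j => x j + (if j ∈ A then 1 else 0) + (if j = i then δ else 0)
  set z : Fin n → ℤ := fun j => y j + (lam : ℤ) * (if j ∈ A then 1 else 0)
  set t : ℝ := 1 / (lam + 1)
  have ht0 : 0 < t := by positivity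
  have ht1 : t ≤ 1 := div_le_one_of_le₀ (by linarith [lam.cast_nonneg (α := ℝ)]) (by positivity)
  have hy : y = xA + Pi.single i δ := by
    funext j; simp [y, xA, Pi.single_apply]
  have hmid : (fun j => t * realify z j + (1 - t) * realify x j) =
      fun j => t * realify y j + (1 - t) * realify xA j := by
    have ht : t * (lam + 1) = 1 := one_div_mul_cancel (by positivity)
    funext j
    simp only [realify, z, y, xA]
    push_cast
    linear_combination (if j ∈ A then (1 : ℝ) else 0) * ht
  have key : (t : EReal) * f y + ((1 - t : ℝ) : EReal) * f xA ≤
      t * f z + ((1 - t : ℝ) : EReal) * f x :=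
    calc _ ≤ localExt f fun j => t * realify y j + (1 - t) * realify xA j :=
          le_localExt_of_segment f hy hδ ht0.le ht1
      _ = localExt f fun j => t * realify z j + (1 - t) * realify x j := by rw [hmid]
      _ ≤ t * localExt f (realify z) + ((1 - t : ℝ) : EReal) * localExt f (realify x) :=
          hf _ _ t ht0.le ht1
      _ ≤ t * f z + ((1 - t : ℝ) : EReal) * f x := by
          gcongr <;> exact localExt_realify_le f _
  exact EReal.le_of_coe_mul_add_le ht0 (sub_nonneg.2 ht1) hxdom (hbot x) hx key

/-- Step lemma: descending along 𝟙_A from a perturbed point. -/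
theorem step_lemma_characteristic_direction {n : ℕ}
    (f : (Fin n → ℤ) → EReal) (hbot : ∀ x, f x ≠ ⊥)
    (hf : IsIntegrallyConvexFn f)
    (A : Finset (Fin n)) (hA : A.Nonempty)
    (x : Fin n → ℤ) (hxdom : f x ≠ ⊤)
    (hx : f x ≤ f (fun j => x j + if j ∈ A then 1 else 0)) :
    ∀ (i : Fin n) (δ : ℤ), |δ| ≤ 1 → ∀ lam : ℕ,
      f (fun j => x j + (if j ∈ A then 1 else 0) + (if j = i then δ else 0)) ≤
        f (fun j => x j + (if j ∈ A then 1 else 0) + (if j = i then δ else 0) +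
            (lam : ℤ) * (if j ∈ A then 1 else 0)) :=
  step_lemma_characteristic_direction_general f hbot hf A x hxdom hx
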